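/- arXiv:2502.15249 — 3 statements merged into one kernel-verified Lean document; each statement's English description precedes it below -/
import Mathlib

section
/- Let a, n be real numbers and b an integer, and set F(n,k) = (n + 2k + 2b) · ((a)_{k+b})^4 / ((1 + n − a)_{k+b})^4 for integers k ≥ 0. Define R(n,k) = (a−n−1)^4 (10a² − 8ab − 8ak − 14an − 6a + 2b² + 4bk + 6bn + 2b + 2k² + 6kn + 2k + 5n² + 4n + 1) / (2b + 2k + n), G(n,k) = R(n,k) F(n,k), p₁(n) = (2a−n−1)^5, and p₂(n) = 2(4a−2n−1)(a−n−1)^4. Then, provided all Pochhammer symbols appearing are well defined (no Gamma argument is a nonpositive integer) and 2b + 2k + n ≠ 0 and 2b + 2k + 2 + n ≠ 0, the difference equation p₁(n) F(n+1,k) + p₂(n) F(n,k) = G(n,k+1) − G(n,k) holds for every integer k ≥ 0. -/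
/-!
Both `F(ν, k)` and `G(ν, k)` are a rational function of `s = k + b` times `ρ⁴`, where
`ρ = (a)_s / (1 + ν - a)_s`. By `Γ(x + 1) = x Γ(x)`, shifting `k` or `ν` by one multiplies `ρ`
by a rational factor, so after dividing by `ρ⁴` the difference equation becomes an identity of
rational functions in `a, n, s`, which clears to Zeilberger's polynomial certificate.
-/

/-- The Pochhammer symbol with integer (possibly negative) index:
`(x)_m = Γ(x + m) / Γ(x)`. -/
noncomputable def pochZ (x : ℝ) (m : ℤ) : ℝ := Real.Gamma (x + m) / Real.Gamma x

/-- `x` is not a nonpositive integer, i.e. `Γ(x)` is well defined (and nonzero). -/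
def NotNonposInt (x : ℝ) : Prop := ∀ m : ℤ, m ≤ 0 → x ≠ (m : ℝ)

/-- `F(ν, k) = (ν + 2k + 2b) (a)_{k+b}^4 / (1 + ν - a)_{k+b}^4`. -/
noncomputable def Fwz (a : ℝ) (b : ℤ) (ν : ℝ) (k : ℕ) : ℝ :=
  (ν + 2 * (k : ℝ) + 2 * (b : ℝ)) * (pochZ a ((k : ℤ) + b)) ^ 4 /
    (pochZ (1 + ν - a) ((k : ℤ) + b)) ^ 4

/-- The rational certificate `R(ν, k)` produced by Zeilberger's algorithm. -/
noncomputable def Rwz (a : ℝ) (b : ℤ) (ν : ℝ) (k : ℕ) : ℝ :=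
  (a - ν - 1) ^ 4 *
    (10 * a ^ 2 - 8 * a * (b : ℝ) - 8 * a * (k : ℝ) - 14 * a * ν - 6 * a
      + 2 * (b : ℝ) ^ 2 + 4 * (b : ℝ) * (k : ℝ) + 6 * (b : ℝ) * ν + 2 * (b : ℝ)
      + 2 * (k : ℝ) ^ 2 + 6 * (k : ℝ) * ν + 2 * (k : ℝ) + 5 * ν ^ 2 + 4 * ν + 1) /
    (2 * (b : ℝ) + 2 * (k : ℝ) + ν)

/-- `G(ν, k) = R(ν, k) F(ν, k)`. -/
noncomputable def Gwz (a : ℝ) (b : ℤ) (ν : ℝ) (k : ℕ) : ℝ :=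
  Rwz a b ν k * Fwz a b ν k

theorem NotNonposInt.ne_zero {x : ℝ} (h : NotNonposInt x) : x ≠ 0 := by
  simpa using h 0 le_rfl

theorem pochZ_add_one {x : ℝ} {m : ℤ} (hm : x + m ≠ 0) :
    pochZ x (m + 1) = (x + m) * pochZ x m := by
  rw [pochZ, pochZ, Int.cast_add, Int.cast_one, ← add_assoc, Real.Gamma_add_one hm,
    mul_div_assoc]

theorem pochZ_add_one_left {x : ℝ} {m : ℤ} (hx : x ≠ 0) (hm : x + m ≠ 0) :
    pochZ (x + 1) m = pochZ x m * (x + m) / x := by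
  rw [pochZ, pochZ, add_right_comm, Real.Gamma_add_one hm, Real.Gamma_add_one hx]
  field_simp

noncomputable def pochRatio (a ν : ℝ) (m : ℤ) : ℝ := pochZ a m / pochZ (1 + ν - a) m

theorem pochRatio_add_one {a ν : ℝ} {m : ℤ} (hA : a + m ≠ 0) (hB : 1 + ν - a + m ≠ 0) :
    pochRatio a ν (m + 1) = pochRatio a ν m * ((a + m) / (1 + ν - a + m)) := by
  rw [pochRatio, pochRatio, pochZ_add_one hA, pochZ_add_one hB, mul_div_mul_comm, mul_comm]

theorem pochRatio_add_one_left {a ν : ℝ} {m : ℤ} (hB₀ : 1 + ν - a ≠ 0)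
    (hB : 1 + ν - a + m ≠ 0) :
    pochRatio a (ν + 1) m = pochRatio a ν m * ((1 + ν - a) / (1 + ν - a + m)) := by
  rw [pochRatio, pochRatio, show 1 + (ν + 1) - a = 1 + ν - a + 1 by ring,
    pochZ_add_one_left hB₀ hB, div_div_eq_mul_div, mul_div_mul_comm]

noncomputable def wzNumerator (a ν s : ℝ) : ℝ :=
  (a - ν - 1) ^ 4 *
    (10 * a ^ 2 - 8 * a * s - 14 * a * ν - 6 * a + 2 * s ^ 2 + 6 * s * ν + 2 * s
      + 5 * ν ^ 2 + 4 * ν + 1)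

theorem Fwz_eq (a : ℝ) (b : ℤ) (ν : ℝ) (k : ℕ) :
    Fwz a b ν k = (ν + 2 * ((k + b : ℤ) : ℝ)) * pochRatio a ν (k + b) ^ 4 := by
  rw [Fwz, pochRatio, div_pow]
  push_cast
  ring

theorem Gwz_eq {a : ℝ} {b : ℤ} {ν : ℝ} {k : ℕ} (h : 2 * (b : ℝ) + 2 * (k : ℝ) + ν ≠ 0) :
    Gwz a b ν k = wzNumerator a ν ((k + b : ℤ) : ℝ) * pochRatio a ν (k + b) ^ 4 := by
  rw [Gwz, Rwz, Fwz_eq, wzNumerator,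
    show ν + 2 * ((k + b : ℤ) : ℝ) = 2 * b + 2 * k + ν by push_cast; ring,
    ← mul_assoc, div_mul_cancel₀ _ h]
  push_cast
  ring

theorem wzNumerator_certificate (a n s : ℝ) (hB : 1 + n - a + s ≠ 0) :
    (2 * a - n - 1) ^ 5 * ((n + 1 + 2 * s) * ((1 + n - a) / (1 + n - a + s)) ^ 4)
        + 2 * (4 * a - 2 * n - 1) * (a - n - 1) ^ 4 * (n + 2 * s) =
      wzNumerator a n (s + 1) * ((a + s) / (1 + n - a + s)) ^ 4 - wzNumerator a n s := by
  rw [wzNumerator, wzNumerator]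
  field_simp
  ring

theorem wz_difference_equation_general (a n : ℝ) (b : ℤ)
    (hbase₂ : NotNonposInt (1 + n - a))
    (hwd : ∀ k : ℕ, NotNonposInt (a + ((k : ℤ) + b : ℤ)) ∧
      NotNonposInt (1 + n - a + ((k : ℤ) + b : ℤ)) ∧
      NotNonposInt (1 + (n + 1) - a + ((k : ℤ) + b : ℤ)))
    (hden : ∀ k : ℕ, 2 * (b : ℝ) + 2 * (k : ℝ) + n ≠ 0 ∧
      2 * (b : ℝ) + 2 * (k : ℝ) + 2 + n ≠ 0) :
    ∀ k : ℕ,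
      (2 * a - n - 1) ^ 5 * Fwz a b (n + 1) k
          + 2 * (4 * a - 2 * n - 1) * (a - n - 1) ^ 4 * Fwz a b n k =
        Gwz a b n (k + 1) - Gwz a b n k := by
  intro k
  obtain ⟨hA, hB, -⟩ := hwd k
  obtain ⟨hd₀, hd₁⟩ := hden k
  have hd₁' : 2 * (b : ℝ) + 2 * ((k + 1 : ℕ) : ℝ) + n ≠ 0 := by
    push_cast; convert hd₁ using 1; ring
  have hsucc : ((k + 1 : ℕ) : ℤ) + b = (k + b : ℤ) + 1 := by push_cast; ring
  rw [Gwz_eq hd₁', Gwz_eq hd₀, Fwz_eq, Fwz_eq, hsucc, pochRatio_add_one hA.ne_zero hB.ne_zero,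
    pochRatio_add_one_left hbase₂.ne_zero hB.ne_zero, Int.cast_add _ 1, Int.cast_one]
  linear_combination pochRatio a n (k + b) ^ 4 * wzNumerator_certificate a n _ hB.ne_zero

/-- The difference equation `p₁(n) F(n+1, k) + p₂(n) F(n, k) = G(n, k+1) - G(n, k)`. -/
theorem wz_difference_equation (a n : ℝ) (b : ℤ)
    (hbase₁ : NotNonposInt a) (hbase₂ : NotNonposInt (1 + n - a))
    (hbase₃ : NotNonposInt (1 + (n + 1) - a))
    (hwd : ∀ k : ℕ, NotNonposInt (a + ((k : ℤ) + b : ℤ)) ∧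
      NotNonposInt (1 + n - a + ((k : ℤ) + b : ℤ)) ∧
      NotNonposInt (1 + (n + 1) - a + ((k : ℤ) + b : ℤ)))
    (hden : ∀ k : ℕ, 2 * (b : ℝ) + 2 * (k : ℝ) + n ≠ 0 ∧
      2 * (b : ℝ) + 2 * (k : ℝ) + 2 + n ≠ 0) :
    ∀ k : ℕ,
      (2 * a - n - 1) ^ 5 * Fwz a b (n + 1) k
          + 2 * (4 * a - 2 * n - 1) * (a - n - 1) ^ 4 * Fwz a b n k =
        Gwz a b n (k + 1) - Gwz a b n k :=
  wz_difference_equation_general a n b hbase₂ hwd hden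
end

section
/- For every natural number n, the partial sum Σ_{k=0}^{n} ((1/2)_k)^4 / ((2)_k)^4 · (4k + 3) equals 16 − ((3/2)_n)^4 / ((2)_n)^4 · (8n² + 20n + 13). -/
/-!
Gosper's algorithm: the summand `t k = ((1/2)_k / (2)_k)^4 (4k + 3)` is a telescoping difference
`t (k + 1) = R k - R (k + 1)` with `R k = ((3/2)_k / (2)_k)^4 (8k² + 20k + 13)`. Dividing by the common
factor `((3/2)_k / (2)_k)^4 / (k + 2)^4` reduces this to a polynomial identity in `k`, and
`t 0 = 3 = 16 - R 0`.
-/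

/-- The Pochhammer symbol `(x)_k = x (x+1) ⋯ (x+k-1) = Γ(x+k)/Γ(x)`. -/
noncomputable def poch (x : ℝ) (k : ℕ) : ℝ := ∏ i ∈ Finset.range k, (x + i)

lemma poch_pos {x : ℝ} (hx : 0 < x) (k : ℕ) : 0 < poch x k :=
  Finset.prod_pos fun i _ => by positivity

lemma poch_succ (x : ℝ) (k : ℕ) : poch x (k + 1) = poch x k * (x + k) :=
  Finset.prod_range_succ _ k

lemma poch_succ_eq_mul_poch_add_one (x : ℝ) (k : ℕ) : poch x (k + 1) = x * poch (x + 1) k := by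
  simp only [poch, Finset.prod_range_succ', Nat.cast_zero, add_zero, mul_comm x]
  congr 1
  refine Finset.prod_congr rfl fun i _ => ?_
  push_cast
  ring

/-- The Gosper certificate, with the factor `(3/2)_k^4 / (2)_k^4` removed. -/
lemma gosper_certificate (x : ℝ) :
    (x + 2) ^ 4 * (8 * x ^ 2 + 20 * x + 13)
      - (x + 3/2) ^ 4 * (8 * (x + 1) ^ 2 + 20 * (x + 1) + 13) = (4 * (x + 1) + 3) / 16 := by
  ring

lemma summand_succ_eq_sub (k : ℕ) :
    (poch (1/2) (k + 1)) ^ 4 / (poch 2 (k + 1)) ^ 4 * (4 * ((k + 1 : ℕ) : ℝ) + 3) =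
      (poch (3/2) k) ^ 4 / (poch 2 k) ^ 4 * (8 * (k : ℝ) ^ 2 + 20 * k + 13)
        - (poch (3/2) (k + 1)) ^ 4 / (poch 2 (k + 1)) ^ 4
          * (8 * ((k + 1 : ℕ) : ℝ) ^ 2 + 20 * ((k + 1 : ℕ) : ℝ) + 13) := by
  have hA : poch (3/2) k ≠ 0 := (poch_pos (by norm_num) k).ne'
  have hB : poch 2 k ≠ 0 := (poch_pos (by norm_num) k).ne'
  have hk : (2 : ℝ) + k ≠ 0 := by positivity
  rw [poch_succ_eq_mul_poch_add_one, show (1/2 : ℝ) + 1 = 3/2 by norm_num,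
    poch_succ 2, poch_succ (3/2)]
  push_cast
  field_simp
  linear_combination -16 * gosper_certificate k

theorem partial_sum_identity (n : ℕ) :
    ∑ k ∈ Finset.range (n + 1),
        (poch (1/2) k) ^ 4 / (poch 2 k) ^ 4 * (4 * (k : ℝ) + 3) =
      16 - (poch (3/2) n) ^ 4 / (poch 2 n) ^ 4 *
        (8 * (n : ℝ) ^ 2 + 20 * n + 13) := by
  induction n with
  | zero => norm_num [poch]
  | succ n ih => rw [Finset.sum_range_succ, ih, summand_succ_eq_sub]; ring
end

section
/- The series Σ_{k=0}^∞ (−1/4)^k · ((1/2)_k)^5 / ((1)_k · ((5)_k)^4) · (20k² + 104k + 145) converges and equals 2^31 / (5^4 · 7^4 · π²). -/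
open Finset Filter Real Topology
open Nat (centralBinom)
open scoped Nat

theorem HasSum.eq_sub_of_telescoping {G : Type*} [AddCommGroup G] [TopologicalSpace G]
    [IsTopologicalAddGroup G] [T2Space G] {f g : ℕ → G} {s l : G} (hf : HasSum f s)
    (hfg : ∀ k, f k = g (k + 1) - g k) (hg : Tendsto g atTop (𝓝 l)) : s = l - g 0 :=
  tendsto_nhds_unique hf.tendsto_sum_nat <| by
    simpa only [hfg, sum_range_sub] using hg.sub_const (g 0)

namespace Series

lemma poch_zero (x : ℝ) : poch x 0 = 1 := prod_range_zero _

lemma poch_succ_right (x : ℝ) (k : ℕ) : poch x (k + 1) = poch x k * (x + k) :=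
  prod_range_succ _ _

lemma poch_succ_left (x : ℝ) (k : ℕ) : poch x (k + 1) = x * poch (x + 1) k := by
  simp only [poch, prod_range_succ', Nat.cast_add, Nat.cast_one, Nat.cast_zero, add_zero]
  rw [mul_comm]
  congr 1
  exact prod_congr rfl fun i _ => by ring

lemma poch_pos {x : ℝ} (hx : 0 < x) (k : ℕ) : 0 < poch x k :=
  prod_pos fun _ _ => by positivity

lemma poch_le_poch {x y : ℝ} (hx : 0 ≤ x) (hxy : x ≤ y) (k : ℕ) : poch x k ≤ poch y k :=
  prod_le_prod (fun _ _ => by positivity) fun _ _ => by linarith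

noncomputable def hyperTerm (a : ℝ) (k : ℕ) : ℝ :=
  (-1/4 : ℝ) ^ k * poch (1/2) k ^ 5 / (poch 1 k * poch a k ^ 4)

lemma hyperTerm_zero (a : ℝ) : hyperTerm a 0 = 1 := by
  simp [hyperTerm, poch_zero]

lemma hyperTerm_succ {a : ℝ} (ha : 0 < a) (k : ℕ) :
    hyperTerm a (k + 1) = hyperTerm a k * (-(2 * k + 1) ^ 5 / (128 * (k + 1) * (a + k) ^ 4)) := by
  have := poch_pos one_pos k
  have := poch_pos ha k
  simp only [hyperTerm, poch_succ_right]
  field_simp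
  ring

lemma hyperTerm_add_one {a : ℝ} (ha : 0 < a) (k : ℕ) :
    hyperTerm (a + 1) k = hyperTerm a k * (a / (a + k)) ^ 4 := by
  have := poch_pos one_pos k
  have := poch_pos ha k
  have := poch_pos (show 0 < a + 1 by linarith) k
  have hrec : a * poch (a + 1) k = poch a k * (a + k) := by
    rw [← poch_succ_left, poch_succ_right]
  simp only [hyperTerm]
  field_simp
  rw [mul_assoc, ← mul_pow, ← hrec]
  ring

noncomputable def wzF (a : ℝ) (k : ℕ) : ℝ :=
  hyperTerm a k * (20 * k ^ 2 + (24 * a - 16) * k + (8 * a ^ 2 - 12 * a + 5))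

noncomputable def wzG (a : ℝ) (k : ℕ) : ℝ :=
  hyperTerm a k * (-8 * k * (2 * k + 4 * a - 3))

lemma wzF_sub_wzF_add_one {a : ℝ} (ha : 0 < a) (k : ℕ) :
    wzF a k - ((2 * a - 1) / (2 * a)) ^ 4 * wzF (a + 1) k = wzG a (k + 1) - wzG a k := by
  have : (0 : ℝ) < a + k := by positivity
  simp only [wzF, wzG, hyperTerm_add_one ha, hyperTerm_succ ha]
  push_cast
  field_simp
  ring

lemma abs_hyperTerm_le {a : ℝ} (ha : 0 < a) (k : ℕ) :
    |hyperTerm a k| ≤ (1/4) ^ k * (poch 1 k / poch a k) ^ 4 := by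
  have h1 := poch_pos one_pos k
  have ha' := poch_pos ha k
  have hhalf := poch_pos (by norm_num : (0 : ℝ) < 1/2) k
  have hle : poch (1/2) k ≤ poch 1 k := poch_le_poch (by norm_num) (by norm_num) k
  have hrhs : (1/4 : ℝ) ^ k * (poch 1 k / poch a k) ^ 4
      = (1/4) ^ k * poch 1 k ^ 5 / (poch 1 k * poch a k ^ 4) := by
    field_simp
  rw [hrhs, hyperTerm, abs_div, abs_mul, abs_pow, abs_pow, abs_of_pos hhalf,
    abs_of_pos (by positivity : 0 < poch 1 k * poch a k ^ 4)]
  norm_num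
  gcongr

lemma abs_hyperTerm_le_geometric {a : ℝ} (ha : 1 ≤ a) (k : ℕ) :
    |hyperTerm a k| ≤ (1/4) ^ k := by
  refine (abs_hyperTerm_le (by linarith) k).trans (mul_le_of_le_one_right (by positivity) ?_)
  exact pow_le_one₀ (div_nonneg (poch_pos one_pos k).le (poch_pos (by linarith) k).le)
    (div_le_one_of_le₀ (poch_le_poch zero_le_one ha k) (poch_pos (by linarith) k).le)

lemma abs_hyperTerm_succ_le {a : ℝ} (ha : 1 ≤ a) (k : ℕ) :
    |hyperTerm a (k + 1)| ≤ (1/4) ^ (k + 1) / a ^ 4 := by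
  have h2 := poch_pos two_pos k
  have ha' := poch_pos (by linarith : 0 < a + 1) k
  have hratio : poch 1 (k + 1) / poch a (k + 1) ≤ 1 / a := by
    rw [poch_succ_left, poch_succ_left, one_add_one_eq_two, one_mul,
      div_le_div_iff₀ (by positivity) (by linarith)]
    nlinarith [poch_le_poch zero_le_two (by linarith : (2 : ℝ) ≤ a + 1) k]
  have hnonneg : 0 ≤ poch 1 (k + 1) / poch a (k + 1) :=
    div_nonneg (poch_pos one_pos _).le (poch_pos (by linarith) _).le
  calc |hyperTerm a (k + 1)| ≤ (1/4) ^ (k + 1) * (poch 1 (k + 1) / poch a (k + 1)) ^ 4 :=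
        abs_hyperTerm_le (by linarith) _
    _ ≤ (1/4) ^ (k + 1) * (1 / a) ^ 4 := by gcongr
    _ = (1/4) ^ (k + 1) / a ^ 4 := by ring

lemma summable_hyperTerm_mul_pow {a : ℝ} (ha : 1 ≤ a) (j : ℕ) :
    Summable fun k => hyperTerm a k * (k : ℝ) ^ j := by
  have hgeom := summable_pow_mul_geometric_of_norm_lt_one j (r := (1/4 : ℝ)) (by norm_num)
  refine hgeom.of_norm_bounded fun k => ?_
  rw [norm_mul, norm_pow, Real.norm_natCast, Real.norm_eq_abs, mul_comm]
  gcongr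
  exact abs_hyperTerm_le_geometric ha k

lemma summable_wzF {a : ℝ} (ha : 1 ≤ a) : Summable (wzF a) := by
  have h := (((summable_hyperTerm_mul_pow ha 2).mul_left 20).add
    ((summable_hyperTerm_mul_pow ha 1).mul_left (24 * a - 16))).add
    ((summable_hyperTerm_mul_pow ha 0).mul_left (8 * a ^ 2 - 12 * a + 5))
  exact h.congr fun k => by simp only [wzF]; ring

lemma tendsto_wzG {a : ℝ} (ha : 1 ≤ a) : Tendsto (wzG a) atTop (𝓝 0) := by
  have h := ((summable_hyperTerm_mul_pow ha 2).mul_left (-16)).add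
    ((summable_hyperTerm_mul_pow ha 1).mul_left (-8 * (4 * a - 3)))
  exact (h.congr fun k => by simp only [wzG]; ring).tendsto_atTop_zero

lemma wzF_zero (a : ℝ) : wzF a 0 = 8 * a ^ 2 - 12 * a + 5 := by
  simp [wzF, hyperTerm_zero]

lemma wzG_zero (a : ℝ) : wzG a 0 = 0 := by
  simp [wzG]

lemma tsum_wzF_eq {a : ℝ} (ha : 1 ≤ a) :
    ∑' k, wzF a k = ((2 * a - 1) / (2 * a)) ^ 4 * ∑' k, wzF (a + 1) k := by
  have hdiff := (summable_wzF ha).hasSum.sub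
    ((summable_wzF (by linarith : 1 ≤ a + 1)).hasSum.mul_left (((2 * a - 1) / (2 * a)) ^ 4))
  have := hdiff.eq_sub_of_telescoping (wzF_sub_wzF_add_one (by linarith)) (tendsto_wzG ha)
  rw [wzG_zero] at this
  linarith

lemma abs_wzF_succ_le {a : ℝ} (ha : 1 ≤ a) (k : ℕ) :
    |wzF a (k + 1)| ≤ 52 * ((k : ℝ) + 1) ^ 2 * (1/4) ^ (k + 1) / a ^ 2 := by
  have hk : (0 : ℝ) ≤ k := k.cast_nonneg
  have hweight : |20 * ((k + 1 : ℕ) : ℝ) ^ 2 + (24 * a - 16) * ((k + 1 : ℕ) : ℝ)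
      + (8 * a ^ 2 - 12 * a + 5)| ≤ 52 * a ^ 2 * ((k : ℝ) + 1) ^ 2 := by
    push_cast
    rw [abs_of_nonneg (by nlinarith)]
    nlinarith [mul_nonneg (mul_nonneg hk hk) (sub_nonneg.2 ha), mul_nonneg hk (sub_nonneg.2 ha),
      mul_nonneg (mul_nonneg hk hk) (mul_nonneg (sub_nonneg.2 ha) (sub_nonneg.2 ha)),
      mul_nonneg hk (mul_nonneg (sub_nonneg.2 ha) (sub_nonneg.2 ha))]
  calc |wzF a (k + 1)| ≤ (1/4) ^ (k + 1) / a ^ 4 * (52 * a ^ 2 * ((k : ℝ) + 1) ^ 2) := by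
        rw [wzF, abs_mul]
        exact mul_le_mul (abs_hyperTerm_succ_le ha k) hweight (abs_nonneg _) (by positivity)
    _ = 52 * ((k : ℝ) + 1) ^ 2 * (1/4) ^ (k + 1) / a ^ 2 := by
        field_simp

lemma summable_succ_sq_mul_geometric :
    Summable fun k : ℕ => 52 * ((k : ℝ) + 1) ^ 2 * (1/4 : ℝ) ^ (k + 1) := by
  have h := (summable_nat_add_iff 1).2
    (summable_pow_mul_geometric_of_norm_lt_one 2 (r := (1/4 : ℝ)) (by norm_num))
  exact (h.mul_left 52).congr fun k => by push_cast; ring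

lemma abs_tsum_wzF_succ_le {a : ℝ} (ha : 1 ≤ a) :
    |∑' k, wzF a (k + 1)| ≤ (∑' k : ℕ, 52 * ((k : ℝ) + 1) ^ 2 * (1/4) ^ (k + 1)) / a ^ 2 := by
  rw [← Real.norm_eq_abs]
  exact tsum_of_norm_bounded (summable_succ_sq_mul_geometric.hasSum.div_const (a ^ 2))
    fun k => (Real.norm_eq_abs _).trans_le (abs_wzF_succ_le ha k)

lemma centralBinom_div_four_pow_succ (m : ℕ) :
    (centralBinom (m + 1) : ℝ) / 4 ^ (m + 1)
      = centralBinom m / 4 ^ m * ((2 * m + 1) / (2 * m + 2)) := by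
  have h : ((m : ℝ) + 1) * centralBinom (m + 1) = 2 * (2 * m + 1) * centralBinom m := by
    exact_mod_cast Nat.succ_mul_centralBinom_succ m
  field_simp
  rw [pow_succ]
  linear_combination (2 * 4 ^ m : ℝ) * h

lemma centralBinom_div_four_pow_sq_mul_wallis (m : ℕ) :
    ((centralBinom m : ℝ) / 4 ^ m) ^ 2 * ((2 * m + 1) * Real.Wallis.W m) = 1 := by
  have hfact : (centralBinom m : ℝ) * m ! * m ! = (2 * m)! := by
    have h := Nat.choose_mul_factorial_mul_factorial (n := 2 * m) (k := m) (by omega)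
    rw [show 2 * m - m = m by omega, ← Nat.centralBinom_eq_two_mul_choose] at h
    exact_mod_cast h
  have hC : (centralBinom m : ℝ) ≠ 0 := by exact_mod_cast Nat.centralBinom_ne_zero m
  have h4 : (4 : ℝ) ^ m = 2 ^ (2 * m) := by rw [pow_mul]; norm_num
  rw [Real.Wallis.W_eq_factorial_ratio, ← hfact, h4]
  field_simp
  ring

lemma tendsto_centralBinom_div_four_pow_pow_four_mul :
    Tendsto (fun m : ℕ => ((centralBinom m : ℝ) / 4 ^ m) ^ 4 * (8 * m ^ 2 + 4 * m + 1)) atTop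
      (𝓝 (8 / π ^ 2)) := by
  have hx : Tendsto (fun m : ℕ => (2 * (m : ℝ) + 1)⁻¹) atTop (𝓝 0) :=
    tendsto_inv_atTop_zero.comp <| tendsto_atTop_add_const_right _ _ <|
      tendsto_natCast_atTop_atTop.const_mul_atTop two_pos
  have hlim := ((tendsto_const_nhds (x := (2 : ℝ))).sub (hx.const_mul 2) |>.add (hx.pow 2)).div
    (Real.Wallis.tendsto_W_nhds_pi_div_two.pow 2) (by positivity)
  rw [show (2 - 2 * 0 + 0 ^ 2) / (π / 2) ^ 2 = 8 / π ^ 2 by field_simp; ring] at hlim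
  refine hlim.congr fun m => ?_
  -- with `q = C(2m, m)/4^m`, `x = (2m+1)⁻¹`: `q² = x / W m` and `x² (8m² + 4m + 1) = 2 - 2x + x²`
  have hQ := eq_one_div_of_mul_eq_one_left (centralBinom_div_four_pow_sq_mul_wallis m)
  have hW := (Real.Wallis.W_pos m).ne'
  rw [Pi.div_apply, show ((centralBinom m : ℝ) / 4 ^ m) ^ 4
    = (((centralBinom m : ℝ) / 4 ^ m) ^ 2) ^ 2 by ring, hQ]
  field_simp
  ring

lemma centralBinom_div_four_pow_pow_four_mul_tsum_wzF (m : ℕ) :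
    ((centralBinom m : ℝ) / 4 ^ m) ^ 4 * ∑' k, wzF (m + 1) k = ∑' k, wzF 1 k := by
  induction m with
  | zero => simp
  | succ m ih =>
    rw [← ih, centralBinom_div_four_pow_succ, tsum_wzF_eq (a := (m : ℝ) + 1) (by simp)]
    push_cast
    ring

lemma tsum_wzF_one : ∑' k, wzF 1 k = 8 / π ^ 2 := by
  have hsplit (m : ℕ) : ((centralBinom m : ℝ) / 4 ^ m) ^ 4 * ∑' k, wzF (m + 1) k
      = ((centralBinom m : ℝ) / 4 ^ m) ^ 4 * (8 * m ^ 2 + 4 * m + 1)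
        + ((centralBinom m : ℝ) / 4 ^ m) ^ 4 * ∑' k, wzF (m + 1) (k + 1) := by
    rw [(summable_wzF (by simp)).tsum_eq_zero_add, wzF_zero]
    ring
  set T := ∑' k : ℕ, 52 * ((k : ℝ) + 1) ^ 2 * (1/4 : ℝ) ^ (k + 1)
  have htail : Tendsto (fun m : ℕ => ((centralBinom m : ℝ) / 4 ^ m) ^ 4
      * ∑' k, wzF (m + 1) (k + 1)) atTop (𝓝 0) := by
    refine squeeze_zero_norm (a := fun m : ℕ => T / ((m : ℝ) + 1) ^ 2) (fun m => ?_)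
      (tendsto_const_nhds.div_atTop ((tendsto_pow_atTop two_ne_zero).comp
        (tendsto_atTop_add_const_right _ 1 tendsto_natCast_atTop_atTop)))
    have hQ : (centralBinom m : ℝ) / 4 ^ m ≤ 1 :=
      div_le_one_of_le₀ (by exact_mod_cast Nat.centralBinom_le_four_pow m) (by positivity)
    rw [norm_mul, Real.norm_eq_abs, Real.norm_eq_abs, abs_of_nonneg (by positivity)]
    exact (mul_le_of_le_one_left (abs_nonneg _) (pow_le_one₀ (by positivity) hQ)).trans
      (abs_tsum_wzF_succ_le (a := (m : ℝ) + 1) (by simp))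
  have hlim := tendsto_centralBinom_div_four_pow_pow_four_mul.add htail
  simp_rw [add_zero, ← hsplit, centralBinom_div_four_pow_pow_four_mul_tsum_wzF] at hlim
  exact tendsto_nhds_unique tendsto_const_nhds hlim

theorem hasSum_wzF_natCast_add_one (m : ℕ) :
    HasSum (wzF (m + 1)) (8 / (π ^ 2 * ((centralBinom m : ℝ) / 4 ^ m) ^ 4)) := by
  have h := centralBinom_div_four_pow_pow_four_mul_tsum_wzF m
  rw [tsum_wzF_one] at h
  have hQ : (centralBinom m : ℝ) / 4 ^ m ≠ 0 := by
    have := Nat.centralBinom_pos m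
    positivity
  rw [div_mul_eq_div_div, ← h, mul_div_cancel_left₀ _ (pow_ne_zero 4 hQ)]
  exact (summable_wzF (by simp)).hasSum

end Series

theorem series_b5 :
    HasSum
      (fun k : ℕ =>
        (-1/4 : ℝ) ^ k * (poch (1/2) k) ^ 5 / (poch 1 k * (poch 5 k) ^ 4) *
          (20 * (k : ℝ) ^ 2 + 104 * k + 145))
      (2 ^ 31 / (5 ^ 4 * 7 ^ 4 * Real.pi ^ 2)) := by
  convert Series.hasSum_wzF_natCast_add_one 4 using 1
  · funext k
    norm_num [Series.wzF, Series.hyperTerm]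
  · rw [show Nat.centralBinom 4 = 70 from rfl]
    field_simp
    norm_num
end
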